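/- For (p,q) = (2,3) and every nonnegative integer U: W(U) = 1 if and only if U ∈ {0,1} or U = 3·2^a − 1 for some nonnegative integer a. -/

import Mathlib

/-- A strictly chained `(p,q)`-ary partition of `U`: a finite strictly decreasing
list of positive integers of the form `p^a * q^b`, each part divisible by the next,
summing to `U`. -/
def IsSCPartition (p q U : ℕ) (l : List ℕ) : Prop :=
  (∀ x ∈ l, ∃ a b : ℕ, x = p ^ a * q ^ b) ∧
  List.Chain' (fun x y => y ∣ x ∧ y < x) l ∧
  l.sum = U

/-- The set of strictly chained `(p,q)`-ary partitions of `U`. -/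
def Omega (p q U : ℕ) : Set (List ℕ) := {l | IsSCPartition p q U l}

/-- The subset of `Omega p q U` of partitions with no part equal to `1`. -/
def OmegaStar (p q U : ℕ) : Set (List ℕ) := {l | IsSCPartition p q U l ∧ 1 ∉ l}

/-- `W p q U` is the number of strictly chained `(p,q)`-ary partitions of `U`. -/
noncomputable def W (p q U : ℕ) : ℕ := (Omega p q U).ncard

/-- `Wstar p q U` is the number of strictly chained `(p,q)`-ary partitions of `U`
with no part equal to `1`. -/
noncomputable def Wstar (p q U : ℕ) : ℕ := (OmegaStar p q U).ncard

/-!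
The smallest part of a chained partition divides every part, hence `U`. When `3 ∤ U` it is
therefore `1` or even, so a partition of such a `U` either ends in `1` or is twice a partition
of `U / 2`. For `U ≡ 2 (mod 3)` this gives bijections `Ω(2V) ≃ Ω(V)` for `V ≡ 1` and
`Ω(2V + 1) ≃ Ω(V)` for `V ≡ 2 (mod 3)`, which carry `W(1) = 1` to `W(2) = 1` and then along
`U ↦ 2U + 1` to every `3·2^a - 1`. Running the same recursion backwards from any other
`U ≡ 2 (mod 3)` ends at some `U ≥ 3` with `U ≢ 2 (mod 3)`, which has two partitions: its
binary expansion, and three times the binary expansion of `⌊U/3⌋` followed by `1` if `U ≡ 1`.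
-/

theorem isSCPartition_iff_pairwise {p q U : ℕ} {l : List ℕ} :
    IsSCPartition p q U l ↔ (∀ x ∈ l, ∃ a b : ℕ, x = p ^ a * q ^ b) ∧
      l.Pairwise (fun x y => y ∣ x ∧ y < x) ∧ l.sum = U :=
  and_congr_right' <| and_congr_left' <| @List.isChain_iff_pairwise _ _ _
    ⟨fun h₁ h₂ => ⟨h₂.1.trans h₁.1, h₂.2.trans h₁.2⟩⟩

theorem pow_mul_pow_eq_one_or_dvd (p q a b : ℕ) :
    p ^ a * q ^ b = 1 ∨ p ∣ p ^ a * q ^ b ∨ q ∣ p ^ a * q ^ b := by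
  rcases a with _ | a
  · rcases b with _ | b
    · simp
    · exact .inr <| .inr <| Dvd.dvd.mul_left (dvd_pow_self q b.succ_ne_zero) _
  · exact .inr <| .inl <| Dvd.dvd.mul_right (dvd_pow_self p a.succ_ne_zero) _

namespace IsSCPartition

variable {p q U V : ℕ} {l : List ℕ}

theorem nil : IsSCPartition p q 0 [] :=
  ⟨by simp, List.isChain_nil, rfl⟩

theorem pos_of_mem (h : IsSCPartition p q U l) (hp : 0 < p) (hq : 0 < q) {x : ℕ} (hx : x ∈ l) :
    0 < x := by
  obtain ⟨a, b, rfl⟩ := h.1 x hx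
  positivity

theorem pairwise (h : IsSCPartition p q U l) : l.Pairwise (fun x y => y ∣ x ∧ y < x) :=
  (isSCPartition_iff_pairwise.1 h).2.1

theorem exists_mem_forall_dvd (h : IsSCPartition p q U l) (hl : l ≠ []) :
    ∃ d ∈ l, ∀ x ∈ l, d ∣ x :=
  ⟨l.getLast hl, l.getLast_mem hl, fun _ hx =>
    (h.pairwise.imp And.left).rel_getLast_of_rel_getLast_getLast hx dvd_rfl⟩

theorem map_mul {c : ℕ} (h : IsSCPartition p q U l) (hc : ∃ i j, c = p ^ i * q ^ j)
    (hc₀ : 0 < c) : IsSCPartition p q (c * U) (l.map (c * ·)) := by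
  obtain ⟨hf, hp, hs⟩ := isSCPartition_iff_pairwise.1 h
  refine isSCPartition_iff_pairwise.2 ⟨?_, ?_, by rw [List.sum_map_mul_left, List.map_id', hs]⟩
  · simp only [List.mem_map]
    rintro _ ⟨x, hx, rfl⟩
    obtain ⟨a, b, rfl⟩ := hf x hx
    obtain ⟨i, j, rfl⟩ := hc
    exact ⟨i + a, j + b, by ring⟩
  · exact List.pairwise_map.2 <|
      hp.imp fun hxy => ⟨mul_dvd_mul_left c hxy.1, Nat.mul_lt_mul_of_pos_left hxy.2 hc₀⟩

theorem map_mul_iff (hp : p.Prime) (hpq : ¬ p ∣ q) :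
    IsSCPartition p q (p * V) (l.map (p * ·)) ↔ IsSCPartition p q V l := by
  refine ⟨fun h => ?_, fun h => h.map_mul ⟨1, 0, by simp⟩ hp.pos⟩
  obtain ⟨hf, hpw, hs⟩ := isSCPartition_iff_pairwise.1 h
  refine isSCPartition_iff_pairwise.2 ⟨fun x hx => ?_, ?_, ?_⟩
  · obtain ⟨_ | a, b, hab⟩ := hf _ (List.mem_map_of_mem hx)
    · exact absurd (hp.dvd_of_dvd_pow (by simpa using Dvd.intro x hab)) hpq
    · exact ⟨a, b, Nat.eq_of_mul_eq_mul_left hp.pos (by rw [hab]; ring)⟩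
  · exact (List.pairwise_map.1 hpw).imp fun hxy =>
      ⟨Nat.dvd_of_mul_dvd_mul_left hp.pos hxy.1, Nat.lt_of_mul_lt_mul_left hxy.2⟩
  · rw [List.sum_map_mul_left, List.map_id'] at hs
    exact Nat.eq_of_mul_eq_mul_left hp.pos hs

theorem append_one_iff : IsSCPartition p q (U + 1) (l ++ [1]) ↔
    IsSCPartition p q U l ∧ ∀ x ∈ l, 1 < x := by
  simp only [isSCPartition_iff_pairwise, List.forall_mem_append, List.pairwise_append,
    List.sum_append, List.forall_mem_singleton, List.pairwise_singleton, List.sum_singleton,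
    one_dvd, true_and, Nat.add_right_cancel_iff]
  exact ⟨fun ⟨⟨hf, _⟩, ⟨hp, h1⟩, hs⟩ => ⟨⟨hf, hp, hs⟩, h1⟩,
    fun ⟨⟨hf, hp, hs⟩, h1⟩ => ⟨⟨hf, 0, 0, by simp⟩, ⟨hp, h1⟩, hs⟩⟩

theorem eq_append_one_of_one_mem (h : IsSCPartition p q U l) (h1 : 1 ∈ l) :
    ∃ m, l = m ++ [1] := by
  obtain ⟨s, t, rfl⟩ := List.append_of_mem h1
  obtain ⟨-, ht, -⟩ := List.pairwise_append.1 h.pairwise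
  rcases t with _ | ⟨y, t⟩
  · exact ⟨s, rfl⟩
  · obtain ⟨hy, hy1⟩ := List.rel_of_pairwise_cons ht List.mem_cons_self
    exact absurd (Nat.dvd_one.1 hy) hy1.ne


theorem one_mem_or_forall_two_dvd (h : IsSCPartition 2 3 U l) (h3 : ¬ 3 ∣ U) :
    1 ∈ l ∨ ∀ x ∈ l, 2 ∣ x := by
  rcases eq_or_ne l [] with rfl | hl
  · simp
  obtain ⟨d, hd, hdvd⟩ := h.exists_mem_forall_dvd hl
  have hdU : d ∣ U := h.2.2 ▸ List.dvd_sum hdvd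
  obtain ⟨a, b, rfl⟩ := h.1 d hd
  rcases pow_mul_pow_eq_one_or_dvd 2 3 a b with h1 | h2 | h3'
  · exact .inl (h1 ▸ hd)
  · exact .inr fun x hx => h2.trans (hdvd x hx)
  · exact absurd (h3'.trans hdU) h3

theorem one_mem (h : IsSCPartition 2 3 U l) (h2 : ¬ 2 ∣ U) (h3 : ¬ 3 ∣ U) : 1 ∈ l :=
  (h.one_mem_or_forall_two_dvd h3).resolve_right fun he => h2 (h.2.2 ▸ List.dvd_sum he)

theorem exists_eq_map_two_mul (h : IsSCPartition 2 3 (2 * V) l) (h1 : 1 ∉ l)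
    (h3 : ¬ 3 ∣ 2 * V) : ∃ k, IsSCPartition 2 3 V k ∧ l = k.map (2 * ·) := by
  have he := (h.one_mem_or_forall_two_dvd h3).resolve_left h1
  have hl : l = (l.map (· / 2)).map (2 * ·) := by
    rw [List.map_map]
    exact (List.map_congr_left fun x hx => Nat.mul_div_cancel' (he x hx)).trans
      (List.map_id l) |>.symm
  refine ⟨l.map (· / 2), ?_, hl⟩
  rw [hl] at h
  exact (map_mul_iff Nat.prime_two (by norm_num)).1 h

end IsSCPartition

theorem Omega_two_mul {V : ℕ} (hV : V % 3 = 1) :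
    Omega 2 3 (2 * V) = List.map (2 * ·) '' Omega 2 3 V := by
  ext l
  refine ⟨fun h => ?_, ?_⟩
  · have h1 : 1 ∉ l := by
      intro h1
      obtain ⟨m, rfl⟩ := h.eq_append_one_of_one_mem h1
      rw [show 2 * V = (2 * V - 1) + 1 by omega, Omega, Set.mem_ofPred_eq,
        IsSCPartition.append_one_iff] at h
      exact lt_irrefl 1 (h.2 1 (h.1.one_mem (by omega) (by omega)))
    obtain ⟨k, hk, rfl⟩ := IsSCPartition.exists_eq_map_two_mul h h1 (by omega)
    exact ⟨k, hk, rfl⟩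
  · rintro ⟨k, hk, rfl⟩
    exact hk.map_mul ⟨1, 0, rfl⟩ two_pos

theorem Omega_two_mul_add_one {V : ℕ} (hV : V % 3 = 2) :
    Omega 2 3 (2 * V + 1) = (fun k => k.map (2 * ·) ++ [1]) '' Omega 2 3 V := by
  ext l
  refine ⟨fun h => ?_, ?_⟩
  · obtain ⟨m, rfl⟩ := h.eq_append_one_of_one_mem (h.one_mem (by omega) (by omega))
    obtain ⟨hm, hm1⟩ := IsSCPartition.append_one_iff.1 h
    obtain ⟨k, hk, rfl⟩ :=
      hm.exists_eq_map_two_mul (fun h1 => lt_irrefl 1 (hm1 1 h1)) (by omega)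
    exact ⟨k, hk, rfl⟩
  · rintro ⟨k, hk, rfl⟩
    refine IsSCPartition.append_one_iff.2 ⟨hk.map_mul ⟨1, 0, rfl⟩ two_pos, ?_⟩
    simp only [List.mem_map]
    rintro _ ⟨x, hx, rfl⟩
    have := hk.pos_of_mem two_pos three_pos hx
    omega

theorem injective_map_two_mul : Function.Injective (List.map (2 * ·)) :=
  List.map_injective_iff.2 (mul_right_injective₀ two_ne_zero)

theorem W_two_mul {V : ℕ} (hV : V % 3 = 1) : W 2 3 (2 * V) = W 2 3 V := by
  rw [W, Omega_two_mul hV, Set.ncard_image_of_injective _ injective_map_two_mul, W]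

theorem W_two_mul_add_one {V : ℕ} (hV : V % 3 = 2) : W 2 3 (2 * V + 1) = W 2 3 V := by
  have hinj : Function.Injective fun k : List ℕ => k.map (2 * ·) ++ [1] :=
    (List.append_left_injective [1]).comp injective_map_two_mul
  rw [W, Omega_two_mul_add_one hV, Set.ncard_image_of_injective _ hinj, W]

theorem Omega_zero {p q : ℕ} (hp : 0 < p) (hq : 0 < q) : Omega p q 0 = {[]} := by
  ext l
  refine ⟨fun h => List.eq_nil_iff_forall_not_mem.2 fun x hx => ?_, ?_⟩
  · exact (h.pos_of_mem hp hq hx).ne' (List.sum_eq_zero_iff.1 h.2.2 x hx)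
  · rintro rfl
    exact IsSCPartition.nil

theorem Omega_one : Omega 2 3 1 = {[1]} := by
  ext l
  refine ⟨fun h => ?_, ?_⟩
  · obtain ⟨m, rfl⟩ := h.eq_append_one_of_one_mem (h.one_mem (by norm_num) (by norm_num))
    have hm : m ∈ Omega 2 3 0 := (IsSCPartition.append_one_iff.1 h).1
    rw [Omega_zero two_pos three_pos, Set.mem_singleton_iff] at hm
    rw [hm]
    rfl
  · rintro rfl
    exact IsSCPartition.append_one_iff.2 ⟨IsSCPartition.nil, by simp⟩

theorem W_zero : W 2 3 0 = 1 := by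
  rw [W, Omega_zero two_pos three_pos, Set.ncard_singleton]

theorem W_one : W 2 3 1 = 1 := by
  rw [W, Omega_one, Set.ncard_singleton]

theorem W_three_mul_two_pow_sub_one (a : ℕ) : W 2 3 (3 * 2 ^ a - 1) = 1 := by
  induction a with
  | zero => rw [show 3 * 2 ^ 0 - 1 = 2 * 1 by rfl, W_two_mul rfl, W_one]
  | succ a ih =>
    have := Nat.one_le_two_pow (n := a)
    rw [show 3 * 2 ^ (a + 1) - 1 = 2 * (3 * 2 ^ a - 1) + 1 by rw [pow_succ]; omega,
      W_two_mul_add_one (by omega), ih]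

def binaryPartition (n : ℕ) : List ℕ := (n.bitIndices.map (2 ^ ·)).reverse

theorem isSCPartition_binaryPartition (n : ℕ) : IsSCPartition 2 3 n (binaryPartition n) := by
  refine isSCPartition_iff_pairwise.2 ⟨?_, ?_, ?_⟩
  · simp only [binaryPartition, List.mem_reverse, List.mem_map]
    rintro _ ⟨i, -, rfl⟩
    exact ⟨i, 0, by simp⟩
  · refine List.pairwise_reverse.2 <| List.pairwise_map.2 <|
      Nat.bitIndices_sorted.pairwise.imp fun hij => ⟨?_, ?_⟩
    · exact pow_dvd_pow 2 hij.le
    · exact Nat.pow_lt_pow_right one_lt_two hij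
  · rw [binaryPartition, List.sum_reverse, Nat.sum_map_two_pow_bitIndices]

theorem not_three_dvd_of_mem_binaryPartition {n x : ℕ} (hx : x ∈ binaryPartition n) :
    ¬ 3 ∣ x := by
  simp only [binaryPartition, List.mem_reverse, List.mem_map] at hx
  obtain ⟨i, -, rfl⟩ := hx
  exact fun h => absurd (Nat.prime_three.dvd_of_dvd_pow h) (by norm_num)

theorem W_ne_one_of_three_dvd_mem {U : ℕ} {l : List ℕ} (h : IsSCPartition 2 3 U l)
    (hl : ∃ x ∈ l, 3 ∣ x) : W 2 3 U ≠ 1 := by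
  intro hW
  obtain ⟨l₀, hl₀⟩ := Set.ncard_eq_one.1 hW
  have hsub : (Omega 2 3 U).Subsingleton := hl₀ ▸ Set.subsingleton_singleton
  obtain ⟨x, hx, h3⟩ := hl
  rw [hsub h (isSCPartition_binaryPartition U)] at hx
  exact not_three_dvd_of_mem_binaryPartition hx h3

theorem W_ne_one_of_mod_three_ne_two {U : ℕ} (hU : 3 ≤ U) (h2 : U % 3 ≠ 2) :
    W 2 3 U ≠ 1 := by
  set V := U / 3
  have hV := isSCPartition_binaryPartition V
  have hmap := hV.map_mul (c := 3) ⟨0, 1, rfl⟩ three_pos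
  obtain ⟨x, hx⟩ := (binaryPartition V).exists_mem_of_ne_nil fun h => by
    have := hV.2.2
    simp [h] at this
    omega
  have h3 : ∃ y ∈ (binaryPartition V).map (3 * ·), 3 ∣ y :=
    ⟨3 * x, List.mem_map_of_mem hx, dvd_mul_right 3 x⟩
  rcases (by omega : U = 3 * V ∨ U = 3 * V + 1) with hU | hU
  · exact hU ▸ W_ne_one_of_three_dvd_mem hmap h3
  · refine hU ▸ W_ne_one_of_three_dvd_mem (IsSCPartition.append_one_iff.2 ⟨hmap, ?_⟩)
      (h3.imp fun y hy => ⟨List.mem_append_left _ hy.1, hy.2⟩)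
    simp only [List.mem_map]
    rintro _ ⟨y, hy, rfl⟩
    have := hV.pos_of_mem two_pos three_pos hy
    omega

theorem W_ne_one {U : ℕ} (h0 : U ≠ 0) (h1 : U ≠ 1) (h : ∀ a, U ≠ 3 * 2 ^ a - 1) :
    W 2 3 U ≠ 1 := by
  induction U using Nat.strong_induction_on with
  | _ U ih =>
  have h2 : U ≠ 2 := h 0
  by_cases hU : U % 3 = 2
  · obtain ⟨V, rfl | rfl⟩ := Nat.even_or_odd' U
    · rw [W_two_mul (by omega)]
      refine ih V (by omega) (by omega) (by omega) fun a ha => ?_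
      have := Nat.one_le_two_pow (n := a)
      omega
    · rw [W_two_mul_add_one (by omega)]
      refine ih V (by omega) (by omega) (by omega) fun a ha => h (a + 1) ?_
      have := Nat.one_le_two_pow (n := a)
      rw [pow_succ]
      omega
  · exact W_ne_one_of_mod_three_ne_two (by omega) hU

theorem W_eq_one_iff (U : ℕ) :
    W 2 3 U = 1 ↔ U = 0 ∨ U = 1 ∨ ∃ a : ℕ, U = 3 * 2 ^ a - 1 := by
  refine ⟨fun hW => ?_, ?_⟩
  · by_contra! h
    exact W_ne_one h.1 h.2.1 h.2.2 hW
  · rintro (rfl | rfl | ⟨a, rfl⟩)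
    · exact W_zero
    · exact W_one
    · exact W_three_mul_two_pow_sub_one a
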